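/- Fix integers d ≥ 1, K′ ≥ 1, M ≥ 1 and a real ξ > 0. For each integer i ≥ 0, let interval i consist of the rounds iK′+1,…,(i+1)K′, and for each round t in interval i let A_t : {0,1}^i → ℝ^d be an arbitrary function. For m = 1,…,M, let epoch m consist of the intervals i with (16^m − 16)/15 ≤ i ≤ (16^{m+1} − 16)/15 − 1 (so epoch m contains 16^m·K′ rounds). Then there exist nested closed intervals [1/4, 3/4] ⊇ I_1 ⊇ I_2 ⊇ … ⊇ I_M, where I_m has length 4^{−(m+3)}, such that for every m ∈ {1,…,M} and every p ∈ I_m, the inequality E_{X∼B_p^{i}}[‖A_t(X) − ξ·p⃗‖₂²] ≥ 16^{−(m+3)}·d·ξ²/8 holds for at least half of the rounds t in the intervals of epoch m (i.e., for at least 16^m·K′/2 rounds t, where i is the index of the interval containing t). -/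

import Mathlib

/-!
Statement 10 (Lemma 7): existence of nested intervals `I_1 ⊇ … ⊇ I_M` inside
`[1/4, 3/4]`, `I_m` of length `4^{−(m+3)}`, such that for every `p ∈ I_m` the
inequality `E_{B_p^i}[‖A_t(X) − ξ·p⃗‖²] ≥ 16^{−(m+3)}·d·ξ²/8` holds for at least
half of the rounds `t` of epoch `m`.
-/

open scoped BigOperators
open Finset

noncomputable section

abbrev EV (d : ℕ) := EuclideanSpace ℝ (Fin d)

/-- Expectation of `F` under the product Bernoulli measure `B_p^i` on `{0,1}^i`. -/
def bernExp (i : ℕ) (p : ℝ) (F : (Fin i → Bool) → ℝ) : ℝ :=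
  ∑ X : Fin i → Bool, (∏ j : Fin i, if X j then p else 1 - p) * F X

/-- The constant vector `(p, …, p) ∈ ℝ^d`. -/
def constVec (d : ℕ) (p : ℝ) : EV d := WithLp.toLp 2 (fun _ => p)

/-- The index of the interval containing round `t` (interval `i` consists of the
rounds `iK′+1, …, (i+1)K′`). -/
def intervalIdx (K' t : ℕ) : ℕ := (t - 1) / K'

/-- The rounds belonging to the intervals of epoch `m`, namely the intervals `i`
with `(16^m − 16)/15 ≤ i ≤ (16^{m+1} − 16)/15 − 1`. -/
def epochRounds (K' m : ℕ) : Finset ℕ :=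
  Finset.Ioc (((16 ^ m - 16) / 15) * K') (((16 ^ (m + 1) - 16) / 15) * K')

/-!
The χ²-divergence of Bernoulli product measures tensorizes, so `B_p^i` and `B_q^i` are close in
total variation as soon as `i (p - q)²` is small. On the overlap of the two measures a single
prediction `A_t(X)` cannot be close to both `ξ p⃗` and `ξ q⃗`, hence the two expected losses add up
to at least `d ξ² (p - q)² / 8`. Consequently every round of epoch `m + 1` satisfies the bound on
the first or on the last quarter of `I_m`, and `I_{m+1}` is the quarter that wins at least half
of the rounds.
-/

namespace DOCOLowerBound

section FiniteDistributions

variable {α : Type*} [Fintype α] {P Q : α → ℝ}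

theorem sq_sum_abs_sub_le_sum_sq_div_sub_one (hP : ∑ x, P x = 1) (hQ : ∑ x, Q x = 1)
    (hQpos : ∀ x, 0 < Q x) :
    (∑ x, |P x - Q x|) ^ 2 ≤ ∑ x, P x ^ 2 / Q x - 1 := by
  have titu := Finset.sq_sum_div_le_sum_sq_div Finset.univ (fun x => |P x - Q x|)
    (fun x _ => hQpos x)
  have expand : ∀ x, |P x - Q x| ^ 2 / Q x = P x ^ 2 / Q x - 2 * P x + Q x := by
    intro x
    field_simp [(hQpos x).ne']
    rw [sq_abs]
    ring
  simp only [expand, Finset.sum_add_distrib, Finset.sum_sub_distrib, ← Finset.mul_sum, hP,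
    hQ, div_one] at titu
  linarith

/-- `1 - ∑ |P x - Q x| / 2 = ∑ min (P x) (Q x)` is the overlap of `P` and `Q`, on which both
losses are charged. -/
theorem mul_one_sub_half_sum_abs_sub_le (hP : ∑ x, P x = 1) (hQ : ∑ x, Q x = 1)
    (hP₀ : ∀ x, 0 ≤ P x) (hQ₀ : ∀ x, 0 ≤ Q x) {f g : α → ℝ} {r : ℝ}
    (hf : ∀ x, 0 ≤ f x) (hg : ∀ x, 0 ≤ g x) (hfg : ∀ x, r ≤ f x + g x) :
    r * (1 - (∑ x, |P x - Q x|) / 2) ≤ ∑ x, P x * f x + ∑ x, Q x * g x := by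
  have pointwise : ∀ x, r * ((P x + Q x - |P x - Q x|) / 2) ≤ P x * f x + Q x * g x := by
    intro x
    have := hfg x
    rcases le_total (P x) (Q x) with h | h
    · rw [abs_of_nonpos (sub_nonpos.2 h)]
      nlinarith [hP₀ x, hf x, hg x]
    · rw [abs_of_nonneg (sub_nonneg.2 h)]
      nlinarith [hQ₀ x, hf x, hg x]
  calc r * (1 - (∑ x, |P x - Q x|) / 2)
      = ∑ x, r * ((P x + Q x - |P x - Q x|) / 2) := by
        rw [← Finset.mul_sum, ← Finset.sum_div, Finset.sum_sub_distrib, Finset.sum_add_distrib,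
          hP, hQ]
        ring
    _ ≤ ∑ x, (P x * f x + Q x * g x) := Finset.sum_le_sum fun x _ => pointwise x
    _ = ∑ x, P x * f x + ∑ x, Q x * g x := Finset.sum_add_distrib

end FiniteDistributions

section Bernoulli

def bernWeight (i : ℕ) (p : ℝ) (X : Fin i → Bool) : ℝ := ∏ j, if X j then p else 1 - p

theorem bernExp_eq_sum (i : ℕ) (p : ℝ) (F : (Fin i → Bool) → ℝ) :
    bernExp i p F = ∑ X, bernWeight i p X * F X := rfl

variable {i : ℕ} {p q : ℝ}

theorem sum_prod_apply_bool (f : Fin i → Bool → ℝ) :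
    ∑ X : Fin i → Bool, ∏ j, f j (X j) = ∏ j, (f j true + f j false) := by
  simp [← Fintype.prod_sum, add_comm]

theorem sum_bernWeight : ∑ X, bernWeight i p X = 1 := by
  simp only [bernWeight]
  rw [sum_prod_apply_bool (fun _ b => if b then p else 1 - p)]
  simp

theorem bernWeight_nonneg (hp : p ∈ Set.Icc (0 : ℝ) 1) (X : Fin i → Bool) :
    0 ≤ bernWeight i p X :=
  Finset.prod_nonneg fun j _ => by split_ifs <;> linarith [hp.1, hp.2]

theorem bernWeight_pos (hp : p ∈ Set.Ioo (0 : ℝ) 1) (X : Fin i → Bool) :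
    0 < bernWeight i p X :=
  Finset.prod_pos fun j _ => by split_ifs <;> linarith [hp.1, hp.2]

theorem sum_bernWeight_sq_div (hq : q ∈ Set.Ioo (0 : ℝ) 1) :
    ∑ X, bernWeight i p X ^ 2 / bernWeight i q X = (1 + (p - q) ^ 2 / (q * (1 - q))) ^ i := by
  have hq₁ : 1 - q ≠ 0 := by linarith [hq.2]
  have one_coord : p ^ 2 / q + (1 - p) ^ 2 / (1 - q) = 1 + (p - q) ^ 2 / (q * (1 - q)) := by
    field_simp [hq.1.ne']
    ring
  simp only [bernWeight, ← Finset.prod_pow, ← Finset.prod_div_distrib]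
  rw [sum_prod_apply_bool (fun _ b => (if b then p else 1 - p) ^ 2 / if b then q else 1 - q)]
  simp [one_coord]

theorem one_add_pow_le_exp_mul {s : ℝ} (hs : 0 ≤ s) (n : ℕ) : (1 + s) ^ n ≤ Real.exp (n * s) := by
  rw [Real.exp_nat_mul, add_comm]
  exact pow_le_pow_left₀ (by linarith) (Real.add_one_le_exp s) n

theorem sum_abs_sub_bernWeight_le (hq : q ∈ Set.Icc (1 / 4 : ℝ) (3 / 4))
    (hi : i * (q - p) ^ 2 ≤ 3 / 16) :
    ∑ X, |bernWeight i p X - bernWeight i q X| ≤ 3 / 2 := by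
  have hq' : q ∈ Set.Ioo (0 : ℝ) 1 := ⟨by linarith [hq.1], by linarith [hq.2]⟩
  set s := (p - q) ^ 2 / (q * (1 - q))
  have hvar : 3 / 16 ≤ q * (1 - q) := by nlinarith [hq.1, hq.2]
  have hs : 0 ≤ s := by positivity
  have his : i * s ≤ 1 := by
    have : s ≤ 16 / 3 * (q - p) ^ 2 := by
      rw [div_le_iff₀ (by linarith)]
      nlinarith [sq_nonneg (p - q)]
    nlinarith [mul_le_mul_of_nonneg_left this (Nat.cast_nonneg i : (0 : ℝ) ≤ i)]
  have chi : (1 + s) ^ i ≤ 13 / 4 :=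
    calc (1 + s) ^ i ≤ Real.exp (i * s) := one_add_pow_le_exp_mul hs i
      _ ≤ Real.exp 1 := Real.exp_le_exp.2 his
      _ ≤ 13 / 4 := by linarith [Real.exp_one_lt_three]
  have tv := sq_sum_abs_sub_le_sum_sq_div_sub_one (P := bernWeight i p) sum_bernWeight
    sum_bernWeight (bernWeight_pos hq')
  rw [sum_bernWeight_sq_div hq'] at tv
  nlinarith [Finset.sum_nonneg fun X (_ : X ∈ Finset.univ) =>
    abs_nonneg (bernWeight i p X - bernWeight i q X)]

end Bernoulli

theorem norm_sub_sq_div_eight_le_bernExp_add {E : Type*} [SeminormedAddCommGroup E] {i : ℕ}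
    {p q : ℝ} (hp : p ∈ Set.Icc (0 : ℝ) 1) (hq : q ∈ Set.Icc (1 / 4 : ℝ) (3 / 4))
    (hi : i * (q - p) ^ 2 ≤ 3 / 16) (F : (Fin i → Bool) → E) (u v : E) :
    ‖u - v‖ ^ 2 / 8 ≤
      bernExp i p (fun X => ‖F X - u‖ ^ 2) + bernExp i q (fun X => ‖F X - v‖ ^ 2) := by
  have hq₀ : q ∈ Set.Icc (0 : ℝ) 1 := ⟨by linarith [hq.1], by linarith [hq.2]⟩
  have separated : ∀ X, ‖u - v‖ ^ 2 / 2 ≤ ‖F X - u‖ ^ 2 + ‖F X - v‖ ^ 2 := by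
    intro X
    have := norm_sub_le_norm_sub_add_norm_sub u (F X) v
    rw [norm_sub_rev u (F X)] at this
    nlinarith [add_sq_le (a := ‖F X - u‖) (b := ‖F X - v‖), norm_nonneg (u - v)]
  have overlap := mul_one_sub_half_sum_abs_sub_le sum_bernWeight sum_bernWeight
    (bernWeight_nonneg hp) (bernWeight_nonneg hq₀) (fun X => sq_nonneg ‖F X - u‖)
    (fun X => sq_nonneg ‖F X - v‖) separated
  have tv := sum_abs_sub_bernWeight_le (p := p) hq hi
  rw [bernExp_eq_sum, bernExp_eq_sum]
  nlinarith [sq_nonneg ‖u - v‖]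

theorem norm_smul_constVec_sub_sq (d : ℕ) (ξ p q : ℝ) :
    ‖ξ • constVec d p - ξ • constVec d q‖ ^ 2 = d * (ξ * (p - q)) ^ 2 := by
  simp [EuclideanSpace.real_norm_sq_eq, constVec, mul_sub]

theorem card_epochRounds (K' : ℕ) {m : ℕ} (hm : 1 ≤ m) : (epochRounds K' m).card = 16 ^ m * K' := by
  have h16 : 16 ≤ 16 ^ m := Nat.le_self_pow (by omega) 16
  have hdvd : 15 ∣ 16 ^ m - 1 := by simpa using Nat.sub_dvd_pow_sub_pow 16 1 m
  have hsucc : (16 ^ (m + 1) - 16) / 15 = (16 ^ m - 16) / 15 + 16 ^ m := by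
    rw [pow_succ]
    omega
  rw [epochRounds, Nat.card_Ioc, hsucc, Nat.add_mul, Nat.add_sub_cancel_left]

theorem fifteen_mul_intervalIdx_lt {K' m t : ℕ} (ht : t ∈ epochRounds K' m) :
    15 * intervalIdx K' t < 16 ^ (m + 1) := by
  rw [epochRounds, Finset.mem_Ioc] at ht
  have hidx : intervalIdx K' t < (16 ^ (m + 1) - 16) / 15 :=
    Nat.div_lt_of_lt_mul (by rw [mul_comm]; omega)
  have := Nat.div_mul_le_self (16 ^ (m + 1) - 16) 15
  omega

def width (m : ℕ) : ℝ := ((4 : ℝ) ^ (m + 3))⁻¹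

theorem width_pos (m : ℕ) : 0 < width m := by
  unfold width
  positivity

theorem width_eq_four_mul_width_succ (m : ℕ) : width m = 4 * width (m + 1) := by
  simp only [width, pow_succ]
  field_simp

theorem four_zpow_neg_eq_width (m : ℕ) : (4 : ℝ) ^ (-((m : ℤ) + 3)) = width m := by
  rw [zpow_neg, width, ← zpow_natCast]
  push_cast
  rfl

theorem width_sq (m : ℕ) : width m ^ 2 = ((16 : ℝ) ^ (m + 3))⁻¹ := by
  rw [width, inv_pow, ← pow_mul, mul_comm, pow_mul]
  norm_num

theorem sixteen_zpow_neg_eq_width_sq (m : ℕ) : (16 : ℝ) ^ (-((m : ℤ) + 3)) = width m ^ 2 := by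
  rw [width_sq, zpow_neg, ← zpow_natCast]
  push_cast
  rfl

theorem natCast_mul_width_sq_le {i m : ℕ} (hi : 15 * i < 16 ^ (m + 2)) :
    (i : ℝ) * width m ^ 2 ≤ 3 / 16 := by
  have hi' : (15 * i : ℝ) ≤ 16 ^ (m + 2) := by exact_mod_cast hi.le
  rw [width_sq, ← div_eq_mul_inv, div_le_iff₀ (by positivity), pow_succ]
  linarith

section Construction

variable {d K' : ℕ} (ξ : ℝ) (A : (t : ℕ) → (Fin (intervalIdx K' t) → Bool) → EV d)

def roundLoss (t : ℕ) (p : ℝ) : ℝ :=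
  bernExp (intervalIdx K' t) p (fun X => ‖A t X - ξ • constVec d p‖ ^ 2)

open Classical in
def goodRounds (m : ℕ) (x : ℝ) : Finset ℕ :=
  (epochRounds K' m).filter fun t =>
    ∀ p ∈ Set.Icc x (x + width m), width m ^ 2 * d * ξ ^ 2 / 8 ≤ roundLoss ξ A t p

/-- `I_m = [leftEnd m, leftEnd m + width m]`; `I_{m+1}` is the first or the last quarter
of `I_m`, whichever has more good rounds in epoch `m + 1`. -/
def leftEnd : ℕ → ℝ
  | 0 => 1 / 4
  | m + 1 =>
    if (goodRounds ξ A (m + 1) (leftEnd m + 3 * width (m + 1))).card ≤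
        (goodRounds ξ A (m + 1) (leftEnd m)).card
    then leftEnd m else leftEnd m + 3 * width (m + 1)

theorem sq_sub_div_eight_le_roundLoss_add {t : ℕ} {p q : ℝ} (hp : p ∈ Set.Icc (0 : ℝ) 1)
    (hq : q ∈ Set.Icc (1 / 4 : ℝ) (3 / 4)) (hi : intervalIdx K' t * (q - p) ^ 2 ≤ 3 / 16) :
    d * (ξ * (p - q)) ^ 2 / 8 ≤ roundLoss ξ A t p + roundLoss ξ A t q := by
  rw [← norm_smul_constVec_sub_sq]
  exact norm_sub_sq_div_eight_le_bernExp_add hp hq hi (A t) _ _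

theorem Icc_leftEnd_succ_subset (m : ℕ) :
    Set.Icc (leftEnd ξ A (m + 1)) (leftEnd ξ A (m + 1) + width (m + 1)) ⊆
      Set.Icc (leftEnd ξ A m) (leftEnd ξ A m + width m) := by
  have := width_eq_four_mul_width_succ m
  have := width_pos (m + 1)
  rw [leftEnd]
  split_ifs <;> exact Set.Icc_subset_Icc (by linarith) (by linarith)

theorem Icc_leftEnd_subset (m : ℕ) :
    Set.Icc (leftEnd ξ A m) (leftEnd ξ A m + width m) ⊆ Set.Icc (1 / 4) (3 / 4) := by
  induction m with
  | zero => exact Set.Icc_subset_Icc le_rfl (by norm_num [leftEnd, width])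
  | succ m ih => exact (Icc_leftEnd_succ_subset ξ A m).trans ih

/-- A round failing on both outer quarters of `[x, x + width m]` would have small loss at two
points at least `2 * width (m + 1)` apart. -/
theorem epochRounds_subset_goodRounds_union {m : ℕ} {x : ℝ}
    (hx : Set.Icc x (x + width m) ⊆ Set.Icc (1 / 4) (3 / 4)) :
    epochRounds K' (m + 1) ⊆
      goodRounds ξ A (m + 1) x ∪ goodRounds ξ A (m + 1) (x + 3 * width (m + 1)) := by
  classical
  intro t ht
  by_contra hbad
  simp only [goodRounds, Finset.mem_union, Finset.mem_filter, ht, true_and, not_or,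
    not_forall, not_le, exists_prop] at hbad
  obtain ⟨⟨p, ⟨hp₁, hp₂⟩, hlossp⟩, ⟨q, ⟨hq₁, hq₂⟩, hlossq⟩⟩ := hbad
  obtain ⟨hx₁, hx₂⟩ := (Set.Icc_subset_Icc_iff (by linarith [width_pos m])).1 hx
  have hw := width_eq_four_mul_width_succ m
  have hw₀ := width_pos (m + 1)
  have hidx := natCast_mul_width_sq_le (fifteen_mul_intervalIdx_lt ht)
  have hdist : (q - p) ^ 2 ≤ width m ^ 2 := pow_le_pow_left₀ (by linarith) (by linarith) 2
  have hsep := sq_sub_div_eight_le_roundLoss_add ξ A (t := t) (p := p) (q := q)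
    ⟨by linarith, by linarith⟩ ⟨by linarith, by linarith⟩
    (le_trans (by gcongr) hidx)
  have hgap : 4 * width (m + 1) ^ 2 ≤ (p - q) ^ 2 := by nlinarith
  have : 0 ≤ (d : ℝ) * ξ ^ 2 := by positivity
  nlinarith

theorem two_mul_card_goodRounds_leftEnd (m : ℕ) :
    16 ^ (m + 1) * K' ≤ 2 * (goodRounds ξ A (m + 1) (leftEnd ξ A (m + 1))).card := by
  classical
  have hcover := Finset.card_le_card
    (epochRounds_subset_goodRounds_union ξ A (Icc_leftEnd_subset ξ A m))
  rw [card_epochRounds K' (by omega)] at hcover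
  have := hcover.trans (Finset.card_union_le _ _)
  rw [leftEnd]
  split_ifs <;> omega

end Construction

end DOCOLowerBound

open DOCOLowerBound

theorem statement_10_general (d K' M : ℕ) (ξ : ℝ)
    (A : (t : ℕ) → (Fin (intervalIdx K' t) → Bool) → EV d) :
    ∃ a : ℕ → ℝ,
      -- I_1 ⊆ [1/4, 3/4]
      Set.Icc (a 1) (a 1 + (4 : ℝ) ^ (-(4 : ℤ))) ⊆ Set.Icc (1 / 4 : ℝ) (3 / 4) ∧
      -- I_{m+1} ⊆ I_m
      (∀ m, 1 ≤ m → m + 1 ≤ M →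
        Set.Icc (a (m + 1)) (a (m + 1) + (4 : ℝ) ^ (-((m : ℤ) + 4))) ⊆
          Set.Icc (a m) (a m + (4 : ℝ) ^ (-((m : ℤ) + 3)))) ∧
      -- for every p ∈ I_m, the inequality holds on at least half the rounds of epoch m
      (∀ m, 1 ≤ m → m ≤ M → ∀ p ∈ Set.Icc (a m) (a m + (4 : ℝ) ^ (-((m : ℤ) + 3))),
        ∃ S : Finset ℕ, S ⊆ epochRounds K' m ∧ 16 ^ m * K' ≤ 2 * S.card ∧
          ∀ t ∈ S, (16 : ℝ) ^ (-((m : ℤ) + 3)) * d * ξ ^ 2 / 8 ≤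
            bernExp (intervalIdx K' t) p
              (fun X => ‖A t X - ξ • constVec d p‖ ^ 2)) := by
  have hwidth_succ (m : ℕ) : (4 : ℝ) ^ (-((m : ℤ) + 4)) = width (m + 1) := by
    rw [← four_zpow_neg_eq_width]
    push_cast
    ring_nf
  classical
  refine ⟨leftEnd ξ A, ?_, fun m _ _ => ?_, fun m hm _ p hp => ?_⟩
  · simpa [width] using Icc_leftEnd_subset ξ A 1
  · rw [hwidth_succ, four_zpow_neg_eq_width]
    exact Icc_leftEnd_succ_subset ξ A m
  · obtain ⟨n, rfl⟩ := Nat.exists_eq_add_of_le' hm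
    rw [four_zpow_neg_eq_width] at hp
    refine ⟨goodRounds ξ A (n + 1) (leftEnd ξ A (n + 1)), Finset.filter_subset _ _,
      two_mul_card_goodRounds_leftEnd ξ A n, fun t ht => ?_⟩
    rw [sixteen_zpow_neg_eq_width_sq]
    exact (Finset.mem_filter.1 ht).2 p hp

theorem statement_10 (d K' M : ℕ) (hd : 1 ≤ d) (hK' : 1 ≤ K') (hM : 1 ≤ M)
    (ξ : ℝ) (hξ : 0 < ξ)
    (A : (t : ℕ) → (Fin (intervalIdx K' t) → Bool) → EV d) :
    ∃ a : ℕ → ℝ,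
      -- I_1 ⊆ [1/4, 3/4]
      Set.Icc (a 1) (a 1 + (4 : ℝ) ^ (-(4 : ℤ))) ⊆ Set.Icc (1 / 4 : ℝ) (3 / 4) ∧
      -- I_{m+1} ⊆ I_m
      (∀ m, 1 ≤ m → m + 1 ≤ M →
        Set.Icc (a (m + 1)) (a (m + 1) + (4 : ℝ) ^ (-((m : ℤ) + 4))) ⊆
          Set.Icc (a m) (a m + (4 : ℝ) ^ (-((m : ℤ) + 3)))) ∧
      -- for every p ∈ I_m, the inequality holds on at least half the rounds of epoch m
      (∀ m, 1 ≤ m → m ≤ M → ∀ p ∈ Set.Icc (a m) (a m + (4 : ℝ) ^ (-((m : ℤ) + 3))),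
        ∃ S : Finset ℕ, S ⊆ epochRounds K' m ∧ 16 ^ m * K' ≤ 2 * S.card ∧
          ∀ t ∈ S, (16 : ℝ) ^ (-((m : ℤ) + 3)) * d * ξ ^ 2 / 8 ≤
            bernExp (intervalIdx K' t) p
              (fun X => ‖A t X - ξ • constVec d p‖ ^ 2)) :=
  statement_10_general d K' M ξ A
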